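/- (Upper-bound half of Theorem 1.) Let μ, x̂, R, c, g and the non-accumulation assumption be as described, let p* = μ{ w ∈ ℝⁿ : x̂ + w ∈ R }, fix β ∈ (0,1) and N ≥ 1, and on ((ℝⁿ)^N, μ^N) let K = |{ i : x̂ + w_i ∉ R }|. Then μ^N { (w₁, …, w_N) : p* ≤ p̄(K) } ≥ 1 − β/2. -/

import Mathlib

open MeasureTheory

/-- `F_{N,k}(p) = Σ_{i=0}^{k} C(N,i) (1−p)^i p^{N−i}`. -/
def binomCDF (N k : ℕ) (p : ℝ) : ℝ :=
  ∑ i ∈ Finset.range (k + 1), (N.choose i : ℝ) * (1 - p) ^ i * p ^ (N - i)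

section Aux

lemma term_deriv (N i : ℕ) (p : ℝ) :
    HasDerivAt (fun p : ℝ => (N.choose i : ℝ) * (1 - p) ^ i * p ^ (N - i))
      ((N.choose i : ℝ) * (((N - i : ℕ)) * (1 - p) ^ i * p ^ (N - i - 1)
        - (i : ℝ) * (1 - p) ^ (i - 1) * p ^ (N - i))) p := by
  have h0 : HasDerivAt (fun p : ℝ => 1 - p) (-1) p := by
    simpa using (hasDerivAt_id p).const_sub 1
  have h1 : HasDerivAt (fun p : ℝ => (1 - p) ^ i)
      ((i : ℝ) * (1 - p) ^ (i - 1) * (-1)) p := by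
    exact (hasDerivAt_pow i (1 - p)).comp p h0
  have h2 : HasDerivAt (fun p : ℝ => p ^ (N - i))
      (((N - i : ℕ) : ℝ) * p ^ (N - i - 1)) p := hasDerivAt_pow (N - i) p
  have h3 := (h1.mul h2).const_mul (N.choose i : ℝ)
  convert h3 using 2
  · rfl
  · rfl
  · simp only [Pi.mul_apply]; ring
  · ring

lemma binomCDF_hasDerivAt (N : ℕ) : ∀ j, j < N → ∀ p : ℝ,
    HasDerivAt (binomCDF N j)
      (((N - j : ℕ) : ℝ) * (N.choose j : ℝ) * (1 - p) ^ j * p ^ (N - j - 1)) p := by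
  intro j
  induction j with
  | zero =>
    intro _ p
    have h := term_deriv N 0 p
    have hfun : binomCDF N 0 = fun p : ℝ => (N.choose 0 : ℝ) * (1 - p) ^ 0 * p ^ (N - 0) := by
      funext q; simp [binomCDF]
    rw [hfun]
    refine h.congr_deriv (Eq.symm ?_)
    simp
  | succ j ih =>
    intro hjN p
    have hj : j < N := by omega
    have hfun : binomCDF N (j + 1) = fun p : ℝ =>
        binomCDF N j p + (N.choose (j+1) : ℝ) * (1 - p) ^ (j+1) * p ^ (N - (j+1)) := by
      funext q; simp [binomCDF, Finset.sum_range_succ]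
    rw [hfun]
    have h := (ih hj p).add (term_deriv N (j+1) p)
    refine h.congr_deriv (Eq.symm ?_)
    have e1 : N - (j+1) - 1 = N - j - 2 := by omega
    have e2 : N - (j+1) = N - j - 1 := by omega
    have e3 : N - j - 1 = (N - j - 2) + 1 := by omega
    have hc : ((N.choose (j+1) : ℝ)) * ((j:ℝ)+1) = (N.choose j : ℝ) * ((N:ℝ) - j) := by
      have h0 := Nat.choose_succ_right_eq N j
      have h1 : ((N.choose (j+1) * (j+1) : ℕ) : ℝ) = ((N.choose j * (N - j) : ℕ) : ℝ) :=
        congrArg (Nat.cast : ℕ → ℝ) h0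
      push_cast [Nat.cast_sub hj.le] at h1
      linarith [h1]
    rw [e1, e2, e3, pow_succ]
    have c1 : ((N - j - 2 + 1 : ℕ) : ℝ) = (N:ℝ) - j - 1 := by
      have e4 : N - j - 2 + 1 = N - (j+1) := by omega
      rw [e4, Nat.cast_sub hjN.le]; push_cast; ring
    have c2 : ((N - j : ℕ) : ℝ) = (N:ℝ) - j := Nat.cast_sub hj.le
    rw [c1, c2]
    simp only [Nat.add_sub_cancel]
    push_cast
    linear_combination ((1 - p) ^ j * p ^ (N - j - 2) * p) * hc

lemma binomCDF_monotoneOn (N j : ℕ) (hj : j < N) :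
    MonotoneOn (binomCDF N j) (Set.Icc (0:ℝ) 1) := by
  have hderiv := binomCDF_hasDerivAt N j hj
  apply monotoneOn_of_deriv_nonneg (convex_Icc 0 1)
  · exact fun p _ => (hderiv p).continuousAt.continuousWithinAt
  · exact fun p _ => ((hderiv p).differentiableAt).differentiableWithinAt
  · intro p hp
    rw [interior_Icc] at hp
    rw [(hderiv p).deriv]
    have h1 : (0:ℝ) ≤ 1 - p := by linarith [hp.2]
    exact mul_nonneg (mul_nonneg (mul_nonneg (by positivity) (by positivity))
      (pow_nonneg h1 j)) (pow_nonneg hp.1.le _)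

lemma binomCDF_top (N : ℕ) (p : ℝ) : binomCDF N N p = 1 := by
  have h : binomCDF N N p = ((1 - p) + p) ^ N := by
    rw [add_pow, binomCDF]
    exact Finset.sum_congr rfl fun i _ => by ring
  rw [h]; simp

lemma term_le_tail (N k : ℕ) (hk1 : 1 ≤ k) (hkN : k ≤ N) (p : ℝ)
    (hp0 : 0 ≤ p) (hp1 : p ≤ 1) :
    (N.choose k : ℝ) * (1 - p) ^ k * p ^ (N - k) ≤ 1 - binomCDF N (k - 1) p := by
  have hsplit : binomCDF N (k-1) p +
      ∑ i ∈ Finset.Ico k (N+1), (N.choose i : ℝ) * (1 - p) ^ i * p ^ (N - i)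
      = binomCDF N N p := by
    rw [binomCDF, binomCDF, Nat.sub_add_cancel hk1, Finset.range_eq_Ico, Finset.range_eq_Ico]
    exact Finset.sum_Ico_consecutive (fun i => (N.choose i : ℝ) * (1 - p) ^ i * p ^ (N - i)) (Nat.zero_le k) (show k ≤ N + 1 by omega)
  rw [binomCDF_top] at hsplit
  have hmem : k ∈ Finset.Ico k (N+1) := Finset.mem_Ico.mpr ⟨le_refl k, by omega⟩
  have hnn : ∀ i ∈ Finset.Ico k (N+1), (0:ℝ) ≤ (N.choose i : ℝ) * (1 - p) ^ i * p ^ (N - i) := by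
    intro i _
    have : (0:ℝ) ≤ 1 - p := by linarith
    positivity
  have := Finset.single_le_sum hnn hmem
  linarith

open scoped Classical in
lemma filter_eq_set {α : Type*} (P : α → Prop) (N : ℕ) (S : Finset (Fin N)) :
    {w : Fin N → α | (Finset.univ.filter fun i => ¬ P (w i)) = S}
      = Set.univ.pi (fun i => if i ∈ S then {x | P x}ᶜ else {x | P x}) := by
  ext w
  simp only [Set.mem_setOf_eq, Finset.ext_iff, Finset.mem_filter, Finset.mem_univ, true_and,
    Set.mem_pi, Set.mem_univ, forall_true_left]
  apply forall_congr'
  intro i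
  by_cases hi : i ∈ S <;> simp [hi]

open scoped Classical in
lemma measurable_count {α : Type*} [MeasurableSpace α] (P : α → Prop)
    (hP : MeasurableSet {x | P x}) (N k : ℕ) :
    MeasurableSet {w : Fin N → α | (Finset.univ.filter fun i => ¬ P (w i)).card = k} := by
  have hunion : {w : Fin N → α | (Finset.univ.filter fun i => ¬ P (w i)).card = k}
      = ⋃ S ∈ Finset.powersetCard k (Finset.univ : Finset (Fin N)),
          {w : Fin N → α | (Finset.univ.filter fun i => ¬ P (w i)) = S} := by
    ext w
    simp only [Set.mem_setOf_eq, Set.mem_iUnion, Finset.mem_powersetCard_univ]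
    constructor
    · intro h; exact ⟨_, h, rfl⟩
    · rintro ⟨S, hS, rfl⟩; exact hS
  rw [hunion]
  apply Finset.measurableSet_biUnion
  intro S _
  rw [filter_eq_set]
  exact MeasurableSet.univ_pi fun i => by split_ifs <;> [exact hP.compl; exact hP]

open scoped Classical in
lemma measure_count {α : Type*} [MeasurableSpace α] (μ : Measure α) [IsProbabilityMeasure μ]
    (P : α → Prop) (hP : MeasurableSet {x | P x}) (N k : ℕ) :
    Measure.pi (fun _ : Fin N => μ)
      {w : Fin N → α | (Finset.univ.filter fun i => ¬ P (w i)).card = k}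
    = (N.choose k) * (μ {x | P x}ᶜ) ^ k * (μ {x | P x}) ^ (N - k) := by
  set A := {x | P x} with hA
  have hmeas : ∀ S : Finset (Fin N),
      MeasurableSet (Set.univ.pi (fun i => if i ∈ S then Aᶜ else A)) := by
    intro S
    exact MeasurableSet.univ_pi fun i => by split_ifs <;> [exact hP.compl; exact hP]
  have hmES : ∀ S : Finset (Fin N),
      Measure.pi (fun _ : Fin N => μ) (Set.univ.pi (fun i => if i ∈ S then Aᶜ else A))
        = (μ Aᶜ) ^ S.card * (μ A) ^ (N - S.card) := by
    intro S
    rw [Measure.pi_pi]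
    simp only [apply_ite μ]
    rw [Finset.prod_ite, Finset.prod_const, Finset.prod_const]
    have h1 : (Finset.univ.filter (· ∈ S)).card = S.card := by
      congr 1; simp
    have h2 : (Finset.univ.filter (fun x => ¬ x ∈ S)).card = N - S.card := by
      have h3 := Finset.card_filter_add_card_filter_not
        (s := (Finset.univ : Finset (Fin N))) (p := (· ∈ S))
      simp only [Finset.card_univ, Fintype.card_fin] at h3
      omega
    rw [h1, h2]
  have hunion : {w : Fin N → α | (Finset.univ.filter fun i => ¬ P (w i)).card = k}
      = ⋃ S ∈ Finset.powersetCard k (Finset.univ : Finset (Fin N)),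
          {w : Fin N → α | (Finset.univ.filter fun i => ¬ P (w i)) = S} := by
    ext w
    simp only [Set.mem_setOf_eq, Set.mem_iUnion, Finset.mem_powersetCard_univ]
    constructor
    · intro h; exact ⟨_, h, rfl⟩
    · rintro ⟨S, hS, rfl⟩; exact hS
  rw [hunion, measure_biUnion_finset]
  · have : ∀ S ∈ Finset.powersetCard k (Finset.univ : Finset (Fin N)),
        Measure.pi (fun _ : Fin N => μ)
          {w : Fin N → α | (Finset.univ.filter fun i => ¬ P (w i)) = S}
        = (μ Aᶜ) ^ k * (μ A) ^ (N - k) := by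
      intro S hS
      rw [Finset.mem_powersetCard_univ] at hS
      rw [filter_eq_set, ← hA, hmES, hS]
    rw [Finset.sum_congr rfl this, Finset.sum_const, Finset.card_powersetCard,
      Finset.card_univ, Fintype.card_fin, nsmul_eq_mul]
    ring
  · intro S hS T hT hST
    simp only [Set.disjoint_left, Set.mem_setOf_eq]
    rintro w rfl h2
    exact hST h2
  · intro S hS
    rw [filter_eq_set, ← hA]
    exact MeasurableSet.univ_pi fun i => by split_ifs <;> [exact hP.compl; exact hP]

end Aux

open scoped Classical in
/-- **upper-bound half of Theorem 1.**
With `p* = μ{w : x̂ + w ∈ R}`, `K` the random number of samples whose successor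
lies outside `R`, and `p̄` characterized by `p̄(0) = 1` and
`F_{N,K−1}(p̄(K)) = 1 − β/(2N)` for `1 ≤ K ≤ N`, we have
`μ^N { p* ≤ p̄(K) } ≥ 1 − β/2`. -/
theorem pac_probability_interval_upper {n m : ℕ} (hn : 1 ≤ n) (hm : 1 ≤ m)
    (M : Matrix (Fin m) (Fin n) ℝ) (b : Fin m → ℝ) (c : Fin n → ℝ)
    (hc : ∀ j, M.mulVec c j < b j)
    (μ : Measure (Fin n → ℝ)) [IsProbabilityMeasure μ]
    (xhat : Fin n → ℝ)
    (hacc : ∀ lam : ℝ,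
      μ {w : Fin n → ℝ | (Finset.univ.sup' ⟨⟨0, hm⟩, Finset.mem_univ _⟩
          fun j => M.mulVec (xhat + w - c) j / (b j - M.mulVec c j)) = lam} = 0)
    (β : ℝ) (hβ : β ∈ Set.Ioo (0 : ℝ) 1) (N : ℕ) (hN : 1 ≤ N)
    (pbar : ℕ → ℝ)
    (hpbar0 : pbar 0 = 1)
    (hpbar : ∀ K, 1 ≤ K → K ≤ N →
      pbar K ∈ Set.Ioo (0 : ℝ) 1 ∧ binomCDF N (K - 1) (pbar K) = 1 - β / (2 * N)) :
    ENNReal.ofReal (1 - β / 2) ≤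
      Measure.pi (fun _ : Fin N => μ)
        {w : Fin N → (Fin n → ℝ) |
          (μ {w' : Fin n → ℝ | ∀ j, M.mulVec (xhat + w') j ≤ b j}).toReal
            ≤ pbar ((Finset.univ.filter fun i : Fin N =>
              ¬ ∀ j, M.mulVec (xhat + w i) j ≤ b j).card)} := by
  have hP : MeasurableSet {v : Fin n → ℝ | ∀ j, M.mulVec (xhat + v) j ≤ b j} := by
    have : {v : Fin n → ℝ | ∀ j, M.mulVec (xhat + v) j ≤ b j}
        = ⋂ j, {v : Fin n → ℝ | M.mulVec (xhat + v) j ≤ b j} := by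
      ext v; simp [Set.mem_iInter]
    rw [this]
    refine MeasurableSet.iInter fun j => ?_
    apply measurableSet_le _ measurable_const
    simp only [Matrix.mulVec, dotProduct, Pi.add_apply]
    exact Finset.measurable_sum _ fun l _ =>
      ((measurable_pi_apply (X := fun _ : Fin n => ℝ) l).const_add (xhat l)).const_mul (M j l)
  set A : Set (Fin n → ℝ) := {v : Fin n → ℝ | ∀ j, M.mulVec (xhat + v) j ≤ b j} with hAdef
  set π := Measure.pi (fun _ : Fin N => μ) with hπ
  set p : ℝ := (μ A).toReal with hpdef
  have hp0 : 0 ≤ p := ENNReal.toReal_nonneg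
  have hp1 : p ≤ 1 := by
    rw [hpdef]
    have h := prob_le_one (μ := μ) (s := A)
    simpa using ENNReal.toReal_mono ENNReal.one_ne_top h
  -- the count function
  set K : (Fin N → (Fin n → ℝ)) → ℕ :=
    fun w => (Finset.univ.filter fun i : Fin N =>
      ¬ ∀ j, M.mulVec (xhat + w i) j ≤ b j).card with hK
  -- the event sets by count
  set Ek : ℕ → Set (Fin N → (Fin n → ℝ)) := fun k => {w | K w = k} with hEk
  have hEkMeas : ∀ k, MeasurableSet (Ek k) := by
    intro k
    have h := measurable_count (fun v : Fin n → ℝ => ∀ j, M.mulVec (xhat + v) j ≤ b j) hP N k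
    simp only [hEk, hK]
    convert h using 1
    congr!
  have hEkMeasure : ∀ k, π (Ek k)
      = (N.choose k) * (μ Aᶜ) ^ k * (μ A) ^ (N - k) := by
    intro k
    have h := measure_count μ (fun v : Fin n → ℝ => ∀ j, M.mulVec (xhat + v) j ≤ b j) hP N k
    simp only [hEk, hK, hπ, hAdef]
    convert h using 2
    congr!
  have hKle : ∀ w, K w ≤ N := by
    intro w
    calc K w ≤ (Finset.univ : Finset (Fin N)).card := Finset.card_filter_le _ _
      _ = N := by simp
  -- the goal set
  set G : Set (Fin N → (Fin n → ℝ)) := {w | p ≤ pbar (K w)} with hG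
  have hGdecomp : G = ⋃ k ∈ (Finset.range (N+1)).filter (fun k => p ≤ pbar k), Ek k := by
    ext w
    simp only [hG, Set.mem_setOf_eq, Set.mem_iUnion, Finset.mem_filter, Finset.mem_range, hEk]
    constructor
    · intro h
      exact ⟨_, ⟨Nat.lt_succ_of_le (hKle w), h⟩, rfl⟩
    · rintro ⟨k, ⟨_, hk⟩, rfl⟩
      exact hk
  have hGmeas : MeasurableSet G := by
    rw [hGdecomp]
    exact Finset.measurableSet_biUnion _ fun k _ => hEkMeas k
  -- per-k bound
  have hkey : ∀ k ∈ (Finset.Icc 1 N).filter (fun k => pbar k < p),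
      π (Ek k) ≤ ENNReal.ofReal (β / (2 * N)) := by
    intro k hk
    rw [Finset.mem_filter, Finset.mem_Icc] at hk
    obtain ⟨⟨hk1, hkN⟩, hklt⟩ := hk
    obtain ⟨hpbarIoo, hpbarEq⟩ := hpbar k hk1 hkN
    set q : ℝ := (μ Aᶜ).toReal with hqdef
    have hAc : μ Aᶜ = ENNReal.ofReal q := (ENNReal.ofReal_toReal (measure_ne_top μ _)).symm
    have hA' : μ A = ENNReal.ofReal p := (ENNReal.ofReal_toReal (measure_ne_top μ _)).symm
    have hq : q = 1 - p := by
      rw [hqdef, measure_compl hP (measure_ne_top μ _), measure_univ,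
        ENNReal.toReal_sub_of_le prob_le_one ENNReal.one_ne_top]
      simp [hpdef]
    have hmeasEq : π (Ek k) = ENNReal.ofReal ((N.choose k : ℝ) * (1 - p) ^ k * p ^ (N - k)) := by
      rw [hEkMeasure k, hAc, hA', ← hq]
      rw [← ENNReal.ofReal_pow (by rw [hq]; linarith), ← ENNReal.ofReal_pow hp0]
      rw [← ENNReal.ofReal_natCast (N.choose k)]
      rw [← ENNReal.ofReal_mul (by positivity), ← ENNReal.ofReal_mul (by positivity)]
    rw [hmeasEq]
    apply ENNReal.ofReal_le_ofReal
    have hkN' : k - 1 < N := by omega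
    have h1 : (N.choose k : ℝ) * (1 - p) ^ k * p ^ (N - k) ≤ 1 - binomCDF N (k - 1) p :=
      term_le_tail N k hk1 hkN p hp0 hp1
    have h2 : binomCDF N (k - 1) (pbar k) ≤ binomCDF N (k - 1) p :=
      binomCDF_monotoneOn N (k - 1) hkN'
        ⟨hpbarIoo.1.le, hpbarIoo.2.le⟩ ⟨hp0, hp1⟩ hklt.le
    have h3 : 1 - binomCDF N (k - 1) p ≤ β / (2 * N) := by
      rw [hpbarEq] at h2
      linarith
    linarith
  -- the complement is contained in the union over bad k
  have hcompl : Gᶜ ⊆ ⋃ k ∈ (Finset.Icc 1 N).filter (fun k => pbar k < p), Ek k := by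
    intro w hw
    simp only [hG, Set.mem_compl_iff, Set.mem_setOf_eq, not_le] at hw
    have hk1 : 1 ≤ K w := by
      by_contra h
      have hk0 : K w = 0 := by omega
      rw [hk0, hpbar0] at hw
      linarith
    simp only [Set.mem_iUnion, Finset.mem_filter, Finset.mem_Icc, hEk, Set.mem_setOf_eq]
    exact ⟨K w, ⟨⟨hk1, hKle w⟩, hw⟩, rfl⟩
  -- bound on complement
  have hGc : π Gᶜ ≤ ENNReal.ofReal (β / 2) := by
    calc π Gᶜ ≤ π (⋃ k ∈ (Finset.Icc 1 N).filter (fun k => pbar k < p), Ek k) :=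
          measure_mono hcompl
      _ ≤ ∑ k ∈ (Finset.Icc 1 N).filter (fun k => pbar k < p), π (Ek k) :=
          measure_biUnion_finset_le _ _
      _ ≤ ∑ k ∈ (Finset.Icc 1 N).filter (fun k => pbar k < p),
            ENNReal.ofReal (β / (2 * N)) := Finset.sum_le_sum hkey
      _ = ((Finset.Icc 1 N).filter (fun k => pbar k < p)).card •
            ENNReal.ofReal (β / (2 * N)) := by rw [Finset.sum_const]
      _ ≤ N • ENNReal.ofReal (β / (2 * N)) := by
          have hcard : ((Finset.Icc 1 N).filter (fun k => pbar k < p)).card ≤ N := by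
            calc ((Finset.Icc 1 N).filter (fun k => pbar k < p)).card
                ≤ (Finset.Icc 1 N).card := Finset.card_filter_le _ _
              _ = N := by rw [Nat.card_Icc]; omega
          rw [nsmul_eq_mul, nsmul_eq_mul]
          exact mul_le_mul' (by exact_mod_cast Nat.cast_le.mpr hcard) le_rfl
      _ = ENNReal.ofReal (β / 2) := by
          rw [nsmul_eq_mul, ← ENNReal.ofReal_natCast N, ← ENNReal.ofReal_mul (by positivity)]
          congr 1
          have hN0 : (N:ℝ) ≠ 0 := by positivity
          field_simp
  -- conclude
  have hGval : π G = 1 - π Gᶜ := by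
    have h := prob_compl_eq_one_sub (μ := π) hGmeas.compl
    rwa [compl_compl] at h
  show ENNReal.ofReal (1 - β / 2) ≤ π G
  rw [hGval]
  apply ENNReal.le_sub_of_add_le_right (measure_ne_top _ _)
  calc ENNReal.ofReal (1 - β / 2) + π Gᶜ
      ≤ ENNReal.ofReal (1 - β / 2) + ENNReal.ofReal (β / 2) := by
        exact add_le_add le_rfl hGc
    _ = ENNReal.ofReal 1 := by
        rw [← ENNReal.ofReal_add (by linarith [hβ.2]) (by linarith [hβ.1])]
        norm_num
    _ = 1 := by simp
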